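/- arXiv:2201.03724 — 3 statements merged into one kernel-verified Lean document; each statement's English description precedes it below -/
import Mathlib

section
/- Let φ be a unit vector in ℂ⁴ with det(T(φ)) ≠ 0. Then there exists a 2×2 unitary matrix W such that the vector φ' = cz·(I ⊗ W)·φ satisfies det(T(φ')) = 0, where I is the 2×2 identity matrix. -/
open Matrix Complex
open scoped ComplexConjugate

noncomputable section

/-- bit of qubit 1 (leftmost) in the index `2a+b`. -/
def bitHi (i : Fin 4) : Fin 2 := ⟨i.val / 2, by have := i.isLt; omega⟩
/-- bit of qubit 0 (rightmost). -/
def bitLo (i : Fin 4) : Fin 2 := ⟨i.val % 2, by omega⟩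

/-- Kronecker product `U ⊗ V` acting on `ℂ⁴`, with `|ab⟩` at index `2a+b`. -/
def kron2 (U V : Matrix (Fin 2) (Fin 2) ℂ) : Matrix (Fin 4) (Fin 4) ℂ :=
  fun i j => U (bitHi i) (bitHi j) * V (bitLo i) (bitLo j)

/-- The controlled-Z gate on two qubits. -/
def czGate : Matrix (Fin 4) (Fin 4) ℂ := diagonal ![1, 1, 1, -1]

/-- The matrix `T(φ)` of a 2-qubit state vector. -/
def Tmat (φ : Fin 4 → ℂ) : Matrix (Fin 2) (Fin 2) ℂ := !![φ 0, φ 1; φ 2, φ 3]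

/-- The basis state `|00⟩` in `ℂ⁴`. -/
def e00 : Fin 4 → ℂ := ![1, 0, 0, 0]

/-!
For `W = [[α, β], [-β̄, ᾱ]]` the determinant `det T(φ')` equals `-L(|α|² - |β|², 2ᾱβ)` for the
real-linear map `L = detForm φ : ℝ × ℂ → ℂ`. As a map `ℝ³ → ℝ²`, `L` has a kernel vector
on the unit sphere, and every point of that sphere is of the form `(|α|² - |β|², 2ᾱβ)` with
`|α|² + |β|² = 1` (surjectivity of the Hopf map), which yields the unitary `W`.
-/

lemma det_Tmat_czGate_kron2_one (φ : Fin 4 → ℂ) (W : Matrix (Fin 2) (Fin 2) ℂ) :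
    (Tmat ((czGate * kron2 1 W).mulVec φ)).det =
      -((W 0 0 * φ 0 + W 0 1 * φ 1) * (W 1 0 * φ 2 + W 1 1 * φ 3) +
        (W 1 0 * φ 0 + W 1 1 * φ 1) * (W 0 0 * φ 2 + W 0 1 * φ 3)) := by
  have hHi : bitHi 0 = 0 ∧ bitHi 1 = 0 ∧ bitHi 2 = 1 ∧ bitHi 3 = 1 := by decide
  have hLo : bitLo 0 = 0 ∧ bitLo 1 = 1 ∧ bitLo 2 = 0 ∧ bitLo 3 = 1 := by decide
  simp only [Tmat, czGate, kron2, mulVec, dotProduct, diagonal, mul_apply, one_apply, of_apply,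
    Fin.sum_univ_four, hHi, hLo, det_fin_two, cons_val', cons_val, cons_val_zero, cons_val_one,
    cons_val_fin_one, ite_mul, mul_ite, one_mul, zero_mul, mul_zero, ite_self, ↓reduceIte,
    Fin.reduceEq, Fin.isValue, zero_ne_one, one_ne_zero, add_zero, zero_add]
  ring

def suMat (α β : ℂ) : Matrix (Fin 2) (Fin 2) ℂ := !![α, β; -conj β, conj α]

lemma suMat_mem_unitaryGroup {α β : ℂ} (h : normSq α + normSq β = 1) :
    suMat α β ∈ unitaryGroup (Fin 2) ℂ := by
  have h' : conj α * α + conj β * β = 1 := by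
    rw [mul_comm, mul_conj, mul_comm, mul_conj]; exact_mod_cast h
  rw [mem_unitaryGroup_iff']
  ext i j
  fin_cases i <;> fin_cases j <;>
    simp only [suMat, mul_apply, star_apply, of_apply, cons_val', cons_val_zero, cons_val_one,
      cons_val_fin_one, RCLike.star_def, Fin.sum_univ_two, map_neg, conj_conj, one_apply,
      Fin.isValue, Fin.zero_eta, Fin.mk_one, zero_ne_one, one_ne_zero, ↓reduceIte]
  · linear_combination h'
  · ring
  · ring
  · linear_combination h'

def detForm (φ : Fin 4 → ℂ) : ℝ × ℂ →ₗ[ℝ] ℂ where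
  toFun v := v.1 * (φ 0 * φ 3 + φ 1 * φ 2) + v.2 * (φ 1 * φ 3) - conj v.2 * (φ 0 * φ 2)
  map_add' v w := by simp only [Prod.fst_add, Prod.snd_add, ofReal_add, map_add]; ring
  map_smul' r v := by
    simp only [Prod.smul_fst, Prod.smul_snd, smul_eq_mul, real_smul, ofReal_mul, map_mul,
      conj_ofReal, RingHom.id_apply]
    ring

lemma det_Tmat_czGate_kron2_suMat (φ : Fin 4 → ℂ) (α β : ℂ) :
    (Tmat ((czGate * kron2 1 (suMat α β)).mulVec φ)).det =
      -detForm φ (normSq α - normSq β, 2 * conj α * β) := by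
  rw [det_Tmat_czGate_kron2_one]
  simp only [detForm, suMat, LinearMap.coe_mk, AddHom.coe_mk, ofReal_sub, ← mul_conj, map_mul,
    conj_conj, map_ofNat, of_apply, cons_val', cons_val_zero, cons_val_one, empty_val',
    cons_val_fin_one]
  ring

lemma exists_mem_ker_sq_add_normSq_eq_one (f : ℝ × ℂ →ₗ[ℝ] ℂ) :
    ∃ v ∈ LinearMap.ker f, v.1 ^ 2 + normSq v.2 = 1 := by
  have hker : LinearMap.ker f ≠ ⊥ := LinearMap.ker_ne_bot_of_finrank_lt <| by
    simp [Module.finrank_prod, Complex.finrank_real_complex]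
  obtain ⟨v, hv, hv0⟩ := Submodule.exists_mem_ne_zero_of_ne_bot hker
  have hr : 0 < v.1 ^ 2 + normSq v.2 := by
    by_cases hw : v.2 = 0
    · have hx : v.1 ≠ 0 := fun hx => hv0 (Prod.ext hx hw)
      simp only [hw, map_zero, add_zero]
      positivity
    · have := normSq_pos.mpr hw
      positivity
  refine ⟨(√(v.1 ^ 2 + normSq v.2))⁻¹ • v, Submodule.smul_mem _ _ hv, ?_⟩
  have hsq : √(v.1 ^ 2 + normSq v.2) ^ 2 = v.1 ^ 2 + normSq v.2 := Real.sq_sqrt hr.le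
  simp only [Prod.smul_fst, Prod.smul_snd, smul_eq_mul, real_smul, normSq_mul, normSq_ofReal]
  field_simp
  linear_combination -hsq

lemma exists_hopf_preimage {x : ℝ} {w : ℂ} (h : x ^ 2 + normSq w = 1) :
    ∃ α β : ℂ, normSq α + normSq β = 1 ∧ normSq α - normSq β = x ∧ 2 * conj α * β = w := by
  by_cases hx : x = -1
  · have hw : w = 0 := normSq_eq_zero.mp (by subst hx; linarith)
    exact ⟨0, 1, by simp, by simp [hx], by simp [hw]⟩
  have hx' : 0 < 1 + x := by
    have : -1 ≤ x := by nlinarith [normSq_nonneg w]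
    linarith [lt_of_le_of_ne this (Ne.symm hx)]
  set a := √((1 + x) / 2)
  have ha : 0 < a := Real.sqrt_pos.mpr (by positivity)
  have ha2 : a ^ 2 = (1 + x) / 2 := Real.sq_sqrt (by positivity)
  refine ⟨a, w / (2 * a), ?_, ?_, ?_⟩
  · simp only [normSq_ofReal, normSq_div, normSq_mul, normSq_ofNat]
    field_simp
    linear_combination (4 * a ^ 2 + 2 * (1 + x) - 4) * ha2 + h
  · simp only [normSq_ofReal, normSq_div, normSq_mul, normSq_ofNat]
    field_simp
    linear_combination (4 * a ^ 2 + 2 * (1 + x) - 4 * x) * ha2 - h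
  · have haC : (a : ℂ) ≠ 0 := by exact_mod_cast ha.ne'
    rw [conj_ofReal]
    field_simp

theorem stmt_9_general (φ : Fin 4 → ℂ) :
    ∃ W ∈ Matrix.unitaryGroup (Fin 2) ℂ,
      (Tmat ((czGate * kron2 1 W).mulVec φ)).det = 0 := by
  obtain ⟨⟨x, w⟩, hker, hunit⟩ := exists_mem_ker_sq_add_normSq_eq_one (detForm φ)
  obtain ⟨α, β, hαβ, hx, hw⟩ := exists_hopf_preimage hunit
  refine ⟨suMat α β, suMat_mem_unitaryGroup hαβ, ?_⟩
  rw [det_Tmat_czGate_kron2_suMat, hx, hw, LinearMap.mem_ker.mp hker, neg_zero]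

/-- if `det T(φ) ≠ 0` there is a unitary `W` such that
`φ' = cz·(I ⊗ W)·φ` satisfies `det T(φ') = 0`. -/
theorem stmt_9 (φ : Fin 4 → ℂ) (hunit : ∑ i, ‖φ i‖ ^ 2 = 1)
    (hdet : (Tmat φ).det ≠ 0) :
    ∃ W ∈ Matrix.unitaryGroup (Fin 2) ℂ,
      (Tmat ((czGate * kron2 1 W).mulVec φ)).det = 0 :=
  stmt_9_general φ
end
end

section
/- Let φ be a unit vector in ℂ⁴ all of whose coordinates are real numbers. Then there exist 2×2 real orthogonal matrices K₁, K₂ and W₁ such that (K₁ ⊗ K₂)·cz·(I ⊗ W₁)·φ = |00⟩, where I is the 2×2 identity matrix. In other words, every real 2-qubit state can be prepared using real local gates and at most one controlled-Z gate. -/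
open Matrix Complex
open scoped ComplexConjugate

noncomputable section

/-- Inclusion of a real 2×2 matrix into the complex 2×2 matrices. -/
def mc (W : Matrix (Fin 2) (Fin 2) ℝ) : Matrix (Fin 2) (Fin 2) ℂ :=
  W.map (fun r => (r : ℂ))

/-
Write a state φ as the 2×2 matrix T = Tmat φ. Then K₁ ⊗ K₂ acts as T ↦ K₁ T K₂ᵀ and cz flips the
sign of the entry T₁₁. Since a unit vector is sent to e₀ by a rotation, K₁ T K₂ᵀ = E₀₀ is
solvable exactly when T = u vᵀ for unit vectors u, v, i.e. when det T = 0 (the Frobenius norm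
being 1). So it suffices to pick a rotation W by an angle t making det (cz · T Wᵀ) vanish; that
determinant has the form α cos 2t + β sin 2t, which has a zero.
-/

namespace Matrix

lemma trace_mul_transpose_mul_transpose_of_mem_orthogonalGroup {m n : Type*} [Fintype m]
    [Fintype n] [DecidableEq n] (T : Matrix m n ℝ) {W : Matrix n n ℝ}
    (hW : W ∈ orthogonalGroup n ℝ) :
    (T * Wᵀ * (T * Wᵀ)ᵀ).trace = (T * Tᵀ).trace := by
  rw [transpose_mul, transpose_transpose, Matrix.mul_assoc, ← Matrix.mul_assoc Wᵀ,
    (mem_orthogonalGroup_iff' n ℝ).mp hW, Matrix.one_mul]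

end Matrix

def czSign (R : Type*) [Ring R] : Matrix (Fin 2) (Fin 2) R := !![1, 1; 1, -1]

def rot (u : Fin 2 → ℝ) : Matrix (Fin 2) (Fin 2) ℝ := !![u 0, u 1; -u 1, u 0]

lemma rot_mem_orthogonalGroup {u : Fin 2 → ℝ} (hu : u ⬝ᵥ u = 1) :
    rot u ∈ orthogonalGroup (Fin 2) ℝ := by
  simp only [dotProduct, Fin.sum_univ_two] at hu
  rw [mem_orthogonalGroup_iff]
  ext i j
  fin_cases i <;> fin_cases j <;> simp [rot, one_apply, mul_apply, Fin.sum_univ_two] <;> linarith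

lemma rot_mulVec_self {u : Fin 2 → ℝ} (hu : u ⬝ᵥ u = 1) : rot u *ᵥ u = ![1, 0] := by
  simp only [dotProduct, Fin.sum_univ_two] at hu
  ext i
  fin_cases i <;> simp [rot, mulVec, dotProduct, Fin.sum_univ_two] <;> linarith

lemma rot_mul_vecMulVec_mul_rot_transpose {u v : Fin 2 → ℝ} (hu : u ⬝ᵥ u = 1)
    (hv : v ⬝ᵥ v = 1) : rot u * vecMulVec u v * (rot v)ᵀ = !![1, 0; 0, 0] := by
  rw [mul_vecMulVec, vecMulVec_mul, vecMul_transpose, rot_mulVec_self hu, rot_mulVec_self hv]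
  ext i j
  fin_cases i <;> fin_cases j <;> simp [vecMulVec]

lemma exists_eq_vecMulVec_of_det_eq_zero {N : Matrix (Fin 2) (Fin 2) ℝ} (hdet : N.det = 0)
    (hN : (N * Nᵀ).trace = 1) :
    ∃ u v : Fin 2 → ℝ, u ⬝ᵥ u = 1 ∧ v ⬝ᵥ v = 1 ∧ N = vecMulVec u v := by
  obtain ⟨a, b, c, d, rfl⟩ : ∃ a b c d, N = !![a, b; c, d] := ⟨_, _, _, _, eta_fin_two N⟩
  rw [det_fin_two_of] at hdet
  simp only [trace_fin_two, mul_apply, Fin.sum_univ_two, transpose_apply, of_apply, cons_val',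
    cons_val_zero, cons_val_one, empty_val', cons_val_fin_one] at hN
  by_cases hrow : c = 0 ∧ d = 0
  · obtain ⟨rfl, rfl⟩ := hrow
    refine ⟨![1, 0], ![a, b], by simp, ?_, ?_⟩
    · simpa [dotProduct, Fin.sum_univ_two] using hN
    · ext i j
      fin_cases i <;> fin_cases j <;> simp [vecMulVec]
  -- v is the normalised second row; det N = 0 makes the first row a multiple of it.
  · have hpos : 0 < c ^ 2 + d ^ 2 := by
      rcases not_and_or.mp hrow with h | h <;> positivity
    set ρ := √(c ^ 2 + d ^ 2)
    have hρ : ρ ≠ 0 := (Real.sqrt_pos.mpr hpos).ne'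
    have hρ2 : ρ ^ 2 = c ^ 2 + d ^ 2 := Real.sq_sqrt hpos.le
    refine ⟨![(a * c + b * d) / ρ, ρ], ![c / ρ, d / ρ], ?_, ?_, ?_⟩
    · simp only [dotProduct, Fin.sum_univ_two, cons_val_zero, cons_val_one, cons_val_fin_one]
      field_simp
      linear_combination (ρ ^ 2 + c ^ 2 + d ^ 2 - 1) * hρ2 + (c ^ 2 + d ^ 2) * hN
        - (a * d - b * c) * hdet
    · simp only [dotProduct, Fin.sum_univ_two, cons_val_zero, cons_val_one, cons_val_fin_one]
      field_simp
      exact hρ2.symm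
    · ext i j
      fin_cases i <;> fin_cases j <;> simp [vecMulVec] <;> field_simp
      · linear_combination a * hρ2 + d * hdet
      · linear_combination b * hρ2 - c * hdet

lemma exists_mul_cos_add_mul_sin_eq_zero (α β : ℝ) :
    ∃ θ, α * Real.cos θ + β * Real.sin θ = 0 := by
  -- arg z is the angle of the vector (-β, α), which is orthogonal to (α, β).
  let z : ℂ := ⟨-β, α⟩
  refine ⟨z.arg, ?_⟩
  have hz : ‖z‖ * (α * Real.cos z.arg + β * Real.sin z.arg) = 0 := by
    linear_combination α * z.norm_mul_cos_arg + β * z.norm_mul_sin_arg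
  rcases mul_eq_zero.mp hz with h | h
  · obtain ⟨hβ, hα⟩ : -β = 0 ∧ α = 0 := Complex.ext_iff.mp (norm_eq_zero.mp h)
    simp [hα, neg_eq_zero.mp hβ]
  · exact h

lemma exists_det_czSign_hadamard_mul_rot_eq_zero (T : Matrix (Fin 2) (Fin 2) ℝ) :
    ∃ w : Fin 2 → ℝ, w ⬝ᵥ w = 1 ∧ (czSign ℝ ⊙ (T * (rot w)ᵀ)).det = 0 := by
  -- For w = (cos t, sin t) the determinant is α cos 2t + β sin 2t with these α, β.
  obtain ⟨θ, hθ⟩ := exists_mul_cos_add_mul_sin_eq_zero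
    (-(T 0 0 * T 1 1 + T 0 1 * T 1 0)) (T 0 0 * T 1 0 - T 0 1 * T 1 1)
  refine ⟨![Real.cos (θ / 2), Real.sin (θ / 2)], ?_, ?_⟩
  · simp [dotProduct, Fin.sum_univ_two, ← sq]
  · rw [← mul_div_cancel₀ θ two_ne_zero, Real.cos_two_mul, Real.sin_two_mul] at hθ
    simp only [det_fin_two, hadamard, czSign, rot, of_apply, mul_apply, transpose_apply,
      Fin.sum_univ_two, cons_val', cons_val_zero, cons_val_one, cons_val_fin_one]
    linear_combination hθ + (T 0 0 * T 1 1 + T 0 1 * T 1 0) * Real.sin_sq_add_cos_sq (θ / 2)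

lemma trace_czSign_hadamard_mul_transpose (M : Matrix (Fin 2) (Fin 2) ℝ) :
    ((czSign ℝ ⊙ M) * (czSign ℝ ⊙ M)ᵀ).trace = (M * Mᵀ).trace := by
  simp [trace_fin_two, mul_apply, Fin.sum_univ_two, hadamard, czSign]

theorem exists_orthogonal_mul_czSign_hadamard_mul_eq (T : Matrix (Fin 2) (Fin 2) ℝ)
    (hT : (T * Tᵀ).trace = 1) :
    ∃ K₁ ∈ orthogonalGroup (Fin 2) ℝ, ∃ K₂ ∈ orthogonalGroup (Fin 2) ℝ,
      ∃ W ∈ orthogonalGroup (Fin 2) ℝ,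
        K₁ * (czSign ℝ ⊙ (T * Wᵀ)) * K₂ᵀ = !![1, 0; 0, 0] := by
  obtain ⟨w, hw, hdet⟩ := exists_det_czSign_hadamard_mul_rot_eq_zero T
  have hW := rot_mem_orthogonalGroup hw
  have hN : ((czSign ℝ ⊙ (T * (rot w)ᵀ)) * (czSign ℝ ⊙ (T * (rot w)ᵀ))ᵀ).trace = 1 := by
    rw [trace_czSign_hadamard_mul_transpose,
      trace_mul_transpose_mul_transpose_of_mem_orthogonalGroup T hW, hT]
  obtain ⟨u, v, hu, hv, huv⟩ := exists_eq_vecMulVec_of_det_eq_zero hdet hN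
  refine ⟨rot u, rot_mem_orthogonalGroup hu, rot v, rot_mem_orthogonalGroup hv, rot w, hW, ?_⟩
  rw [huv, rot_mul_vecMulVec_mul_rot_transpose hu hv]

lemma Tmat_injective : Function.Injective Tmat := by
  intro φ ψ h
  ext i
  fin_cases i
  exacts [congrFun (congrFun h 0) 0, congrFun (congrFun h 0) 1, congrFun (congrFun h 1) 0,
    congrFun (congrFun h 1) 1]

lemma Tmat_kron2_mulVec (U V : Matrix (Fin 2) (Fin 2) ℂ) (φ : Fin 4 → ℂ) :
    Tmat (kron2 U V *ᵥ φ) = U * Tmat φ * Vᵀ := by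
  ext i j
  fin_cases i <;> fin_cases j <;>
    simp [Tmat, kron2, bitHi, bitLo, mulVec, dotProduct, Fin.sum_univ_four, mul_apply,
      Fin.sum_univ_two] <;> ring

lemma Tmat_czGate_mulVec (φ : Fin 4 → ℂ) :
    Tmat (czGate *ᵥ φ) = czSign ℂ ⊙ Tmat φ := by
  ext i j
  fin_cases i <;> fin_cases j <;> simp [Tmat, czGate, hadamard, czSign, mulVec_diagonal]

lemma Tmat_e00 : Tmat e00 = !![1, 0; 0, 0] := by
  ext i j
  fin_cases i <;> fin_cases j <;> simp [Tmat, e00]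

lemma mc_mul (A B : Matrix (Fin 2) (Fin 2) ℝ) : mc (A * B) = mc A * mc B :=
  Matrix.map_mul (f := Complex.ofRealHom)

lemma mc_transpose (A : Matrix (Fin 2) (Fin 2) ℝ) : mc Aᵀ = (mc A)ᵀ := transpose_map

lemma mc_czSign_hadamard (A : Matrix (Fin 2) (Fin 2) ℝ) :
    mc (czSign ℝ ⊙ A) = czSign ℂ ⊙ mc A := by
  ext i j
  fin_cases i <;> fin_cases j <;> simp [mc, hadamard, czSign]

lemma Tmat_eq_mc_of_im_eq_zero {φ : Fin 4 → ℂ} (hreal : ∀ i, (φ i).im = 0) :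
    Tmat φ = mc ((Tmat φ).map re) := by
  ext i j
  fin_cases i <;> fin_cases j <;> simp [Tmat, mc, Complex.ext_iff, hreal]

lemma trace_re_Tmat_mul_transpose {φ : Fin 4 → ℂ} (hreal : ∀ i, (φ i).im = 0) :
    ((Tmat φ).map re * ((Tmat φ).map re)ᵀ).trace = ∑ i, ‖φ i‖ ^ 2 := by
  simp [Tmat, trace_fin_two, mul_apply, Fin.sum_univ_two, Fin.sum_univ_four, Complex.sq_norm,
    Complex.normSq_apply, hreal, add_assoc]

/-- every real 2-qubit state can be prepared using real local gates and at
most one controlled-Z gate: `(K₁ ⊗ K₂)·cz·(I ⊗ W₁)·φ = |00⟩` with `K₁, K₂, W₁` real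
orthogonal. -/
theorem stmt_17 (φ : Fin 4 → ℂ) (hunit : ∑ i, ‖φ i‖ ^ 2 = 1)
    (hreal : ∀ i, (φ i).im = 0) :
    ∃ K₁ ∈ Matrix.orthogonalGroup (Fin 2) ℝ, ∃ K₂ ∈ Matrix.orthogonalGroup (Fin 2) ℝ,
      ∃ W₁ ∈ Matrix.orthogonalGroup (Fin 2) ℝ,
        (kron2 (mc K₁) (mc K₂) * czGate * kron2 1 (mc W₁)).mulVec φ = e00 := by
  obtain ⟨K₁, hK₁, K₂, hK₂, W, hW, hprep⟩ := exists_orthogonal_mul_czSign_hadamard_mul_eq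
    ((Tmat φ).map re) (by rw [trace_re_Tmat_mul_transpose hreal, hunit])
  refine ⟨K₁, hK₁, K₂, hK₂, W, hW, Tmat_injective ?_⟩
  rw [← mulVec_mulVec, ← mulVec_mulVec, Tmat_kron2_mulVec, Tmat_czGate_mulVec,
    Tmat_kron2_mulVec, Matrix.one_mul, Tmat_eq_mc_of_im_eq_zero hreal, Tmat_e00, ← mc_transpose,
    ← mc_mul, ← mc_czSign_hadamard, ← mc_transpose, ← mc_mul, ← mc_mul, hprep]
  ext i j
  fin_cases i <;> fin_cases j <;> simp [mc]
end
end

section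
/- Let A = [[α,0],[0,0]] be a 2×2 real matrix with α ≠ 0, and let B be a nonzero 2×2 real matrix with det(B) = 0. Then there exists a 2×2 real orthogonal matrix U of the form (1/√(x²+y²))·[[x,y],[-y,x]] with (x,y) ≠ (0,0) such that, with Z = diag(1,-1), there is a nonzero row vector v ∈ ℝ² for which all four rows of the two matrices A·U and B·U·Z are real scalar multiples of v. -/
open Matrix

noncomputable section

/-- The real rotation matrix `(1/√(x²+y²))·[[x,y],[-y,x]]`. -/
def Rrot (x y : ℝ) : Matrix (Fin 2) (Fin 2) ℝ :=
  (Real.sqrt (x ^ 2 + y ^ 2))⁻¹ • !![x, y; -y, x]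

/-!
Identify a row vector `(a, b)` with `a + b i`. A singular `B` has all its rows on one line
`ℝ w`, and right multiplication by `!![x, y; -y, x]` followed by `Z = diag(1,-1)` is
`u ↦ conj (u z)` with `z = x + y i`. Choosing `z` with `z² = conj w` gives
`conj (w z) = z² conj z = |z|² z`, so every row of `B U Z` is a multiple of `(x, y)`, which
is also the direction of the only nonzero row of `A U`.
-/

theorem Matrix.exists_eq_smul_of_dotProduct_eq_zero {K : Type*} [Field K] {k r : Fin 2 → K}
    (hk : k ≠ 0) (h : r ⬝ᵥ k = 0) : ∃ c : K, r = c • ![-k 1, k 0] := by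
  rw [dotProduct, Fin.sum_univ_two] at h
  by_cases hk0 : k 0 = 0
  · have hk1 : k 1 ≠ 0 := fun hk1 => hk (by ext i; fin_cases i <;> simp [hk0, hk1])
    have hr1 : r 1 = 0 := by simpa [hk0, hk1] using h
    refine ⟨-r 0 / k 1, ?_⟩
    ext i; fin_cases i <;> simp [hk0, hr1, hk1]
  · refine ⟨r 1 / k 0, ?_⟩
    ext i; fin_cases i
    · simp only [Fin.zero_eta, Fin.isValue, Pi.smul_apply, Matrix.cons_val_zero, smul_eq_mul]
      field_simp
      linear_combination h
    · simp [hk0]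

theorem Matrix.exists_rows_eq_smul_of_det_eq_zero {K : Type*} [Field K]
    {B : Matrix (Fin 2) (Fin 2) K} (h : B.det = 0) :
    ∃ w : Fin 2 → K, w ≠ 0 ∧ ∀ r, ∃ c : K, B r = c • w := by
  obtain ⟨k, hk, hBk⟩ := Matrix.exists_mulVec_eq_zero_iff.mpr h
  refine ⟨![-k 1, k 0], fun hw => hk ?_, fun r => ?_⟩
  · ext i; fin_cases i
    · simpa using congrFun hw 1
    · simpa using congrFun hw 0
  · exact exists_eq_smul_of_dotProduct_eq_zero hk (congrFun hBk r)

theorem exists_eq_conj_sq (w : Fin 2 → ℝ) :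
    ∃ x y : ℝ, w = ![x ^ 2 - y ^ 2, -(2 * x * y)] := by
  obtain ⟨z, hz⟩ := IsAlgClosed.exists_pow_nat_eq (⟨w 0, -w 1⟩ : ℂ) two_pos
  refine ⟨z.re, z.im, ?_⟩
  ext i; fin_cases i
  · simpa [pow_two] using (congrArg Complex.re hz).symm
  · have him := congrArg Complex.im hz
    simp only [pow_two, Complex.mul_im] at him
    simp only [Fin.mk_one, Fin.isValue, cons_val_one, cons_val_zero]
    linear_combination him

theorem Matrix.exists_row_mul_eq_smul_row_zero {R : Type*} [Semiring R] (a : R)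
    (M : Matrix (Fin 2) (Fin 2) R) (r : Fin 2) : ∃ c : R, (!![a, 0; 0, 0] * M) r = c • M 0 := by
  fin_cases r
  · exact ⟨a, by ext j; simp [mul_apply]⟩
  · exact ⟨0, by ext j; simp [mul_apply]⟩

theorem Matrix.vecMul_rot_mul_diag {R : Type*} [CommRing R] (x y : R) :
    ![x ^ 2 - y ^ 2, -(2 * x * y)] ᵥ* (!![x, y; -y, x] * !![1, 0; 0, -1]) =
      (x ^ 2 + y ^ 2) • ![x, y] := by
  ext j; fin_cases j <;> simp [vecMul, dotProduct, Fin.sum_univ_two, mul_apply] <;> ring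

theorem Rrot_apply_zero (x y : ℝ) :
    Rrot x y 0 = (Real.sqrt (x ^ 2 + y ^ 2))⁻¹ • ![x, y] := by
  ext j; fin_cases j <;> simp [Rrot]

theorem vecMul_Rrot_mul_diag (x y : ℝ) :
    ![x ^ 2 - y ^ 2, -(2 * x * y)] ᵥ* (Rrot x y * !![1, 0; 0, -1]) =
      Real.sqrt (x ^ 2 + y ^ 2) • ![x, y] := by
  rw [Rrot, smul_mul, vecMul_smul, vecMul_rot_mul_diag, smul_smul, inv_mul_eq_div,
    Real.div_sqrt]

theorem stmt_18_general (α : ℝ) (B : Matrix (Fin 2) (Fin 2) ℝ) (hdet : B.det = 0) :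
    ∃ x y : ℝ, (x, y) ≠ (0, 0) ∧
      ∃ v : Fin 2 → ℝ, v ≠ 0 ∧
        (∀ r : Fin 2, ∃ c : ℝ, (!![α, 0; 0, 0] * Rrot x y) r = c • v) ∧
        (∀ r : Fin 2, ∃ c : ℝ, (B * Rrot x y * !![(1 : ℝ), 0; 0, -1]) r = c • v) := by
  obtain ⟨w, hw, hBw⟩ := exists_rows_eq_smul_of_det_eq_zero hdet
  obtain ⟨x, y, rfl⟩ := exists_eq_conj_sq w
  have hv : ![x, y] ≠ 0 := fun h =>
    hw (by simp [show x = 0 from congrFun h 0, show y = 0 from congrFun h 1])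
  refine ⟨x, y, fun h => hv (by simp_all), ![x, y], hv, fun r => ?_, fun r => ?_⟩
  · obtain ⟨c, hc⟩ := exists_row_mul_eq_smul_row_zero α (Rrot x y) r
    refine ⟨c * (Real.sqrt (x ^ 2 + y ^ 2))⁻¹, ?_⟩
    rw [hc, Rrot_apply_zero, mul_smul]
  · obtain ⟨c, hc⟩ := hBw r
    refine ⟨c * Real.sqrt (x ^ 2 + y ^ 2), ?_⟩
    rw [Matrix.mul_assoc, mul_apply_eq_vecMul, hc, smul_vecMul, vecMul_Rrot_mul_diag, mul_smul]

/-- real version of the two-matrices lemma: for `A = [[α,0],[0,0]]`, `α ≠ 0`,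
and a nonzero real `B` with `det B = 0`, there is a rotation `U = Rrot x y`, `(x,y) ≠ (0,0)`,
such that all four rows of `A·U` and `B·U·Z` are real multiples of a single nonzero row
vector, where `Z = diag(1,-1)`. -/
theorem stmt_18 (α : ℝ) (hα : α ≠ 0) (B : Matrix (Fin 2) (Fin 2) ℝ)
    (hB : B ≠ 0) (hdet : B.det = 0) :
    ∃ x y : ℝ, (x, y) ≠ (0, 0) ∧
      ∃ v : Fin 2 → ℝ, v ≠ 0 ∧
        (∀ r : Fin 2, ∃ c : ℝ, (!![α, 0; 0, 0] * Rrot x y) r = c • v) ∧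
        (∀ r : Fin 2, ∃ c : ℝ, (B * Rrot x y * !![(1 : ℝ), 0; 0, -1]) r = c • v) :=
  stmt_18_general α B hdet
end
end
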